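/- Let D be a ZX-diagram, let w₁ and w₂ be Pauli semiwebs of D, and let ν be a spider of D. Then the product w₁·w₂ satisfies the parity condition at ν if and only if (w₁ satisfies the parity condition at ν ↔ w₂ satisfies the parity condition at ν). -/

import Mathlib

/-- The four Pauli labels. -/
inductive Pauli | I | X | Y | Z
  deriving DecidableEq

instance instFintypePauli : Fintype Pauli where
  elems := {Pauli.I, Pauli.X, Pauli.Y, Pauli.Z}
  complete := fun p => by cases p <;> simp

/-- The Pauli matrices as 2×2 complex matrices. -/
def Pauli.mat : Pauli → Matrix (Fin 2) (Fin 2) ℂ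
  | Pauli.I => 1
  | Pauli.X => !![0, 1; 1, 0]
  | Pauli.Y => !![0, -Complex.I; Complex.I, 0]
  | Pauli.Z => !![1, 0; 0, -1]

/-- A wire labelled `p` has X-support if `p ∈ {X, Y}`. -/
def Pauli.hasX : Pauli → Bool
  | Pauli.X => true | Pauli.Y => true | _ => false

/-- A wire labelled `p` has Z-support if `p ∈ {Y, Z}`. -/
def Pauli.hasZ : Pauli → Bool
  | Pauli.Y => true | Pauli.Z => true | _ => false

/-- Node types of a ZX-diagram: Z-spider, X-spider, or H-gate. -/
inductive NodeType | Z | X | H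
  deriving DecidableEq

/-- A ZX-diagram: nodes, wires, adjacency (each wire meets at most two nodes),
types, phases, and input/output wires.  Nodes of type `H` have exactly two wires. -/
structure ZXDiagram (Node Wire : Type) [Fintype Node] [DecidableEq Node]
    [Fintype Wire] [DecidableEq Wire] where
  adj : Node → Wire → Bool
  typ : Node → NodeType
  phase : Node → ℝ
  inputs : Finset Wire
  outputs : Finset Wire
  wire_max_two : ∀ w : Wire, (Finset.univ.filter fun n => adj n w = true).card ≤ 2
  h_deg_two : ∀ n : Node, typ n = NodeType.H →
    (Finset.univ.filter fun w => adj n w = true).card = 2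

variable {Node Wire : Type} [Fintype Node] [DecidableEq Node] [Fintype Wire] [DecidableEq Wire]

/-- Spiders are the nodes of type Z or X. -/
def ZXDiagram.IsSpiderNode (D : ZXDiagram Node Wire) (ν : Node) : Prop :=
  D.typ ν ≠ NodeType.H

/-- Support of the same type as a spider: Z-support for Z-spiders, X-support for X-spiders. -/
def sameSupp : NodeType → Pauli → Bool
  | NodeType.Z, p => p.hasZ
  | NodeType.X, p => p.hasX
  | NodeType.H, _ => false

/-- Support of the opposite type: X-support for Z-spiders, Z-support for X-spiders. -/
def oppSupp : NodeType → Pauli → Bool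
  | NodeType.Z, p => p.hasX
  | NodeType.X, p => p.hasZ
  | NodeType.H, _ => false

/-- The H condition for a Pauli labelling. -/
def HCond (D : ZXDiagram Node Wire) (w : Wire → Pauli) : Prop :=
  ∀ ν j₁ j₂, D.typ ν = NodeType.H → D.adj ν j₁ = true → D.adj ν j₂ = true → j₁ ≠ j₂ →
    (((w j₁).hasX = true) ↔ ((w j₂).hasZ = true)) ∧
    (((w j₁).hasZ = true) ↔ ((w j₂).hasX = true))

/-- The all-or-nothing condition for a Pauli labelling. -/
def AllOrNothing (D : ZXDiagram Node Wire) (w : Wire → Pauli) : Prop :=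
  ∀ ν, D.IsSpiderNode ν →
    (∀ j, D.adj ν j = true → oppSupp (D.typ ν) (w j) = true) ∨
    (∀ j, D.adj ν j = true → oppSupp (D.typ ν) (w j) = false)

/-- A Pauli semiweb is a Pauli labelling satisfying the H and all-or-nothing conditions. -/
def IsSemiweb (D : ZXDiagram Node Wire) (w : Wire → Pauli) : Prop :=
  HCond D w ∧ AllOrNothing D w

/-- The number of wires adjacent to `ν` with support of the same type as `ν`. -/
def sameCount (D : ZXDiagram Node Wire) (w : Wire → Pauli) (ν : Node) : ℕ :=
  (Finset.univ.filter fun j => D.adj ν j = true ∧ sameSupp (D.typ ν) (w j) = true).card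

/-- Some wire adjacent to `ν` has support of the opposite type. -/
def HasOpp (D : ZXDiagram Node Wire) (w : Wire → Pauli) (ν : Node) : Prop :=
  ∃ j, D.adj ν j = true ∧ oppSupp (D.typ ν) (w j) = true

/-- `x` is an odd integer multiple of `π/2`. -/
def IsOddMulHalfPi (x : ℝ) : Prop := ∃ k : ℤ, x = (2 * k + 1) * (Real.pi / 2)

/-- `x` is an integer multiple of `π/2`. -/
def IsMulHalfPi (x : ℝ) : Prop := ∃ k : ℤ, x = k * (Real.pi / 2)

/-- The parity condition at a spider `ν`. -/
def ParityAt (D : ZXDiagram Node Wire) (w : Wire → Pauli) (ν : Node) : Prop :=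
  (¬ IsOddMulHalfPi (D.phase ν) → Even (sameCount D w ν)) ∧
  (IsOddMulHalfPi (D.phase ν) → (Even (sameCount D w ν) ↔ ¬ HasOpp D w ν))

/-- Multiplication in the Pauli group, ignoring phases (X-support and Z-support are
each XORed). -/
def Pauli.mul : Pauli → Pauli → Pauli
  | Pauli.I, p => p
  | p, Pauli.I => p
  | Pauli.X, Pauli.X => Pauli.I
  | Pauli.X, Pauli.Y => Pauli.Z
  | Pauli.X, Pauli.Z => Pauli.Y
  | Pauli.Y, Pauli.X => Pauli.Z
  | Pauli.Y, Pauli.Y => Pauli.I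
  | Pauli.Y, Pauli.Z => Pauli.X
  | Pauli.Z, Pauli.X => Pauli.Y
  | Pauli.Z, Pauli.Y => Pauli.X
  | Pauli.Z, Pauli.Z => Pauli.I

lemma even_iff_zmod (n : ℕ) : Even n ↔ (n : ZMod 2) = 0 := by
  rw [ZMod.natCast_eq_zero_iff, even_iff_two_dvd]

lemma mul_sameSupp : ∀ (t : NodeType) (p q : Pauli),
    sameSupp t (p.mul q) = xor (sameSupp t p) (sameSupp t q) := by
  intro t p q; cases t <;> cases p <;> cases q <;> rfl

lemma mul_oppSupp : ∀ (t : NodeType) (p q : Pauli),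
    oppSupp t (p.mul q) = xor (oppSupp t p) (oppSupp t q) := by
  intro t p q; cases t <;> cases p <;> cases q <;> rfl

lemma sameCount_mul_zmod {Node Wire : Type} [Fintype Node] [DecidableEq Node]
    [Fintype Wire] [DecidableEq Wire] (D : ZXDiagram Node Wire) (w₁ w₂ : Wire → Pauli)
    (ν : Node) :
    ((sameCount D (fun j => (w₁ j).mul (w₂ j)) ν : ZMod 2))
      = (sameCount D w₁ ν : ZMod 2) + (sameCount D w₂ ν : ZMod 2) := by
  unfold sameCount
  rw [Finset.card_filter, Finset.card_filter, Finset.card_filter]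
  push_cast
  rw [← Finset.sum_add_distrib]
  apply Finset.sum_congr rfl
  intro j _
  by_cases hadj : D.adj ν j = true
  · simp only [hadj, true_and]
    rw [mul_sameSupp]
    cases h1 : sameSupp (D.typ ν) (w₁ j) <;> cases h2 : sameSupp (D.typ ν) (w₂ j) <;> decide
  · simp [hadj]

lemma even_sameCount_mul {Node Wire : Type} [Fintype Node] [DecidableEq Node]
    [Fintype Wire] [DecidableEq Wire] (D : ZXDiagram Node Wire) (w₁ w₂ : Wire → Pauli)
    (ν : Node) :
    Even (sameCount D (fun j => (w₁ j).mul (w₂ j)) ν) ↔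
      (Even (sameCount D w₁ ν) ↔ Even (sameCount D w₂ ν)) := by
  rw [even_iff_zmod, even_iff_zmod, even_iff_zmod, sameCount_mul_zmod]
  generalize (sameCount D w₁ ν : ZMod 2) = a
  generalize (sameCount D w₂ ν : ZMod 2) = b
  revert a b; decide

lemma hasOpp_mul {Node Wire : Type} [Fintype Node] [DecidableEq Node]
    [Fintype Wire] [DecidableEq Wire] (D : ZXDiagram Node Wire) (w₁ w₂ : Wire → Pauli)
    (h₁ : IsSemiweb D w₁) (h₂ : IsSemiweb D w₂) (ν : Node) (hν : D.IsSpiderNode ν) :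
    HasOpp D (fun j => (w₁ j).mul (w₂ j)) ν ↔ Xor' (HasOpp D w₁ ν) (HasOpp D w₂ ν) := by
  constructor
  · rintro ⟨j, hadj, hopp⟩
    rw [mul_oppSupp] at hopp
    cases e1 : oppSupp (D.typ ν) (w₁ j) <;> cases e2 : oppSupp (D.typ ν) (w₂ j) <;>
        rw [e1, e2] at hopp <;> simp at hopp
    · -- w₁ false, w₂ true
      right
      refine ⟨⟨j, hadj, e2⟩, ?_⟩
      rintro ⟨i, hi, hoi⟩
      rcases h₁.2 ν hν with hall | hnone
      · rw [hall j hadj] at e1; exact Bool.noConfusion e1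
      · rw [hnone i hi] at hoi; exact Bool.noConfusion hoi
    · left
      refine ⟨⟨j, hadj, e1⟩, ?_⟩
      rintro ⟨i, hi, hoi⟩
      rcases h₂.2 ν hν with hall | hnone
      · rw [hall j hadj] at e2; exact Bool.noConfusion e2
      · rw [hnone i hi] at hoi; exact Bool.noConfusion hoi
  · rintro (⟨⟨j, hadj, hj⟩, hno⟩ | ⟨⟨j, hadj, hj⟩, hno⟩)
    · refine ⟨j, hadj, ?_⟩
      rw [mul_oppSupp, hj]
      cases e2 : oppSupp (D.typ ν) (w₂ j)
      · rfl
      · exact absurd ⟨j, hadj, e2⟩ hno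
    · refine ⟨j, hadj, ?_⟩
      rw [mul_oppSupp, hj]
      cases e1 : oppSupp (D.typ ν) (w₁ j)
      · rfl
      · exact absurd ⟨j, hadj, e1⟩ hno

/-- The product of two Pauli semiwebs satisfies the parity condition at a
spider `ν` iff the two semiwebs either both satisfy or both violate the parity condition
at `ν`. -/
theorem parityAt_mul_iff {Node Wire : Type} [Fintype Node] [DecidableEq Node]
    [Fintype Wire] [DecidableEq Wire] (D : ZXDiagram Node Wire) (w₁ w₂ : Wire → Pauli)
    (h₁ : IsSemiweb D w₁) (h₂ : IsSemiweb D w₂) (ν : Node) (hν : D.IsSpiderNode ν) :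
    ParityAt D (fun j => (w₁ j).mul (w₂ j)) ν ↔ (ParityAt D w₁ ν ↔ ParityAt D w₂ ν) := by
  have hE := even_sameCount_mul D w₁ w₂ ν
  have hO := hasOpp_mul D w₁ w₂ h₁ h₂ ν hν
  unfold ParityAt Xor' at *
  generalize Even (sameCount D (fun j => (w₁ j).mul (w₂ j)) ν) = E12 at hE ⊢
  generalize Even (sameCount D w₁ ν) = E1 at hE ⊢
  generalize Even (sameCount D w₂ ν) = E2 at hE ⊢
  generalize HasOpp D (fun j => (w₁ j).mul (w₂ j)) ν = O12 at hO ⊢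
  generalize HasOpp D w₁ ν = O1 at hO ⊢
  generalize HasOpp D w₂ ν = O2 at hO ⊢
  generalize IsOddMulHalfPi (D.phase ν) = P
  clear h₁ h₂ hν D w₁ w₂
  by_cases hP : P <;> by_cases e1 : E1 <;> by_cases e2 : E2 <;>
    by_cases o1 : O1 <;> by_cases o2 : O2 <;> simp_all
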